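/- (Cohn's criterion, one direction) If P is a self-inversive polynomial of degree d with all zeros on the unit circle, then P can be written as P(z) = z · h(z) + ε h*(z) with h(z) = (1/d) P'(z), where h has all its zeros in the closed unit disk |z| ≤ 1 and ε is the self-inversive constant of P. -/

import Mathlib

/-!
The identity is a comparison of coefficients: the `j`-th coefficient of `X * P'` is `j • pⱼ`,
and self-inversivity turns the `j`-th coefficient of `ε (P')*` into `(d - j) • pⱼ`; they add up to
`d • pⱼ`. The zeros of `P'` lie in the convex hull of the zeros of `P` (Gauss–Lucas), hence in
the closed unit disk.
-/

open Polynomial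
open scoped ComplexConjugate

noncomputable def conjReciprocal (h : Polynomial ℂ) : Polynomial ℂ :=
  (h.map (starRingEnd ℂ)).reverse

namespace Polynomial

theorem coeff_X_mul_derivative {R : Type*} [Semiring R] (p : R[X]) (n : ℕ) :
    (X * p.derivative).coeff n = n * p.coeff n := by
  cases n with
  | zero => simp
  | succ n => rw [coeff_X_mul, coeff_derivative, ← Nat.cast_succ, Nat.cast_comm]

theorem mem_of_eval_derivative_eq_zero {P : ℂ[X]} {s : Set ℂ} (hs : Convex ℝ s)
    (hP : 0 < P.degree) (hroots : ∀ w, P.eval w = 0 → w ∈ s) {z : ℂ}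
    (hz : P.derivative.eval z = 0) : z ∈ s := by
  rw [eq_centerMass_of_eval_derivative_eq_zero hP hz]
  refine hs.centerMass_mem (fun w _ ↦ derivRootWeight_nonneg P z w)
    (sum_derivRootWeight_pos hP z) fun w hw ↦ hroots w ?_
  exact (mem_roots'.1 (Multiset.mem_toFinset.1 hw)).2

end Polynomial

theorem conjReciprocal_smul (c : ℂ) (h : ℂ[X]) :
    conjReciprocal (c • h) = conj c • conjReciprocal h := by
  rw [conjReciprocal, conjReciprocal, smul_eq_C_mul, smul_eq_C_mul, Polynomial.map_mul, map_C,
    reverse_mul_of_domain, reverse_C]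

/-- For `j > P.natDegree` the truncated subtraction makes the right-hand side vanish. -/
theorem coeff_conjReciprocal_derivative (P : ℂ[X]) (j : ℕ) :
    (conjReciprocal P.derivative).coeff j =
      ((P.natDegree - j : ℕ) : ℂ) * conj (P.coeff (P.natDegree - j)) := by
  rw [conjReciprocal, coeff_reverse, natDegree_map, natDegree_derivative, coeff_map,
    coeff_derivative]
  rcases lt_or_ge j P.natDegree with hj | hj
  · have hsucc : P.natDegree - 1 - j + 1 = P.natDegree - j := by omega
    rw [revAt_le (by omega), hsucc, map_mul, mul_comm, map_add, map_one, map_natCast,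
      ← Nat.cast_add_one, hsucc]
  · have hrev : revAt (P.natDegree - 1) j = j := by
      rcases lt_or_ge (P.natDegree - 1) j with h | h
      · exact revAt_eq_self_of_lt h
      · rw [revAt_le h]; omega
    rw [hrev, Nat.sub_eq_zero_of_le hj, coeff_eq_zero_of_natDegree_lt (by omega)]
    simp

theorem natCast_smul_eq_X_mul_derivative_add_conjReciprocal {P : ℂ[X]} {d : ℕ} {ε : ℂ}
    (hd : P.natDegree = d) (hsi : ∀ j ≤ d, P.coeff j = ε * conj (P.coeff (d - j))) :
    (d : ℂ) • P = X * P.derivative + C ε * conjReciprocal P.derivative := by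
  ext j
  rw [coeff_smul, coeff_add, coeff_C_mul, coeff_conjReciprocal_derivative, hd, smul_eq_mul,
    coeff_X_mul_derivative]
  rcases le_or_gt j d with hj | hj
  · rw [mul_left_comm, ← hsi j hj, Nat.cast_sub hj]
    ring
  · rw [coeff_eq_zero_of_natDegree_lt (hd ▸ hj), Nat.sub_eq_zero_of_le hj.le]
    simp

theorem eq_X_mul_add_C_mul_conjReciprocal {P : ℂ[X]} {d : ℕ} {ε : ℂ} (hd : P.natDegree = d)
    (hd0 : d ≠ 0) (hsi : ∀ j ≤ d, P.coeff j = ε * conj (P.coeff (d - j))) :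
    P = X * ((d : ℂ)⁻¹ • P.derivative) + C ε * conjReciprocal ((d : ℂ)⁻¹ • P.derivative) := by
  rw [conjReciprocal_smul, map_inv₀, map_natCast, mul_smul_comm, mul_smul_comm, ← smul_add,
    ← natCast_smul_eq_X_mul_derivative_add_conjReciprocal hd hsi,
    inv_smul_smul₀ (Nat.cast_ne_zero.2 hd0)]

theorem stmt_8 (P : Polynomial ℂ) (d : ℕ) (ε : ℂ) (hd : P.natDegree = d)
    (hd1 : 0 < d)
    (hsi : ∀ j ≤ d, P.coeff j = ε * (starRingEnd ℂ) (P.coeff (d - j)))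
    (hz : ∀ z : ℂ, P.eval z = 0 → ‖z‖ = 1) :
    P = X * ((d : ℂ)⁻¹ • P.derivative)
        + C ε * conjReciprocal ((d : ℂ)⁻¹ • P.derivative) ∧
      ∀ z : ℂ, ((d : ℂ)⁻¹ • P.derivative).eval z = 0 → ‖z‖ ≤ 1 := by
  refine ⟨eq_X_mul_add_C_mul_conjReciprocal hd hd1.ne' hsi, fun z hz0 ↦ ?_⟩
  have hP' : P.derivative.eval z = 0 := by simpa [hd1.ne'] using hz0
  have hdeg : 0 < P.degree := natDegree_pos_iff_degree_pos.1 (hd ▸ hd1)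
  simpa using mem_of_eval_derivative_eq_zero (convex_closedBall 0 1) hdeg
    (fun w hw ↦ mem_closedBall_zero_iff.2 (hz w hw).le) hP'
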